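/- arXiv:1703.03229 — 4 statements merged into one kernel-verified Lean document; each statement's English description precedes it below -/
import Mathlib

section
/- Let H be a Hopf quasigroup over k, B a right H-comodule magma, and h: H → B an anchor morphism. Let (M, φ_M, ρ_M) be a strong (H,B,h)-Hopf module. Then the endomorphism q_M : M → M defined by q_M(m) = φ_M(m_[0] ⊗ h(λ(m_[1]))) is idempotent, and ρ_M ∘ q_M = q_M ⊗ 1_H (i.e., ρ_M(q_M(m)) = q_M(m) ⊗ 1_H). -/
open TensorProduct

noncomputable section

namespace DoiHopf

variable (k : Type) [Field k]
variable (H : Type) [AddCommGroup H] [Module k H]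

/-- A Hopf quasigroup structure on `H`: a unital (not necessarily associative) magma and a
coassociative counital comonoid such that `eps` and `delta` are morphisms of unital magmas,
with an antipode `lam` satisfying the four Hopf quasigroup antipode identities. -/
structure IsHopfQuasigroup (mul : H ⊗[k] H →ₗ[k] H) (one : H)
    (eps : H →ₗ[k] k) (delta : H →ₗ[k] H ⊗[k] H) (lam : H →ₗ[k] H) : Prop where
  one_mul : ∀ x, mul (one ⊗ₜ[k] x) = x
  mul_one : ∀ x, mul (x ⊗ₜ[k] one) = x
  coassoc : (TensorProduct.assoc k H H H).toLinearMap ∘ₗ delta.rTensor H ∘ₗ delta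
      = delta.lTensor H ∘ₗ delta
  counit_left : ∀ x, (TensorProduct.lid k H) ((eps.rTensor H) (delta x)) = x
  counit_right : ∀ x, (TensorProduct.rid k H) ((eps.lTensor H) (delta x)) = x
  eps_mul : ∀ x y, eps (mul (x ⊗ₜ[k] y)) = eps x * eps y
  eps_one : eps one = 1
  delta_mul : delta ∘ₗ mul = (TensorProduct.map mul mul)
      ∘ₗ (TensorProduct.tensorTensorTensorComm k H H H H).toLinearMap
      ∘ₗ (TensorProduct.map delta delta)
  delta_one : delta one = one ⊗ₜ[k] one
  antipode_left₁ : mul ∘ₗ (TensorProduct.map lam mul)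
      ∘ₗ (TensorProduct.assoc k H H H).toLinearMap ∘ₗ delta.rTensor H
      = (TensorProduct.lid k H).toLinearMap ∘ₗ eps.rTensor H
  antipode_left₂ : mul ∘ₗ (TensorProduct.map (LinearMap.id : H →ₗ[k] H) (mul ∘ₗ lam.rTensor H))
      ∘ₗ (TensorProduct.assoc k H H H).toLinearMap ∘ₗ delta.rTensor H
      = (TensorProduct.lid k H).toLinearMap ∘ₗ eps.rTensor H
  antipode_right₁ : mul ∘ₗ (TensorProduct.map mul lam)
      ∘ₗ (TensorProduct.assoc k H H H).symm.toLinearMap ∘ₗ delta.lTensor H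
      = (TensorProduct.rid k H).toLinearMap ∘ₗ eps.lTensor H
  antipode_right₂ : mul ∘ₗ (TensorProduct.map (mul ∘ₗ lam.lTensor H) (LinearMap.id : H →ₗ[k] H))
      ∘ₗ (TensorProduct.assoc k H H H).symm.toLinearMap ∘ₗ delta.lTensor H
      = (TensorProduct.rid k H).toLinearMap ∘ₗ eps.lTensor H

/-- A right `H`-comodule magma structure on `B`: a unital magma which is a right `H`-comodule
whose coaction is multiplicative for the tensor product magma structure on `B ⊗ H` and
sends the unit to `1_B ⊗ 1_H`. -/
structure IsComoduleMagma (mul : H ⊗[k] H →ₗ[k] H) (one : H)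
    (eps : H →ₗ[k] k) (delta : H →ₗ[k] H ⊗[k] H)
    {B : Type} [AddCommGroup B] [Module k B]
    (mulB : B ⊗[k] B →ₗ[k] B) (oneB : B) (rho : B →ₗ[k] B ⊗[k] H) : Prop where
  oneB_mul : ∀ b, mulB (oneB ⊗ₜ[k] b) = b
  mul_oneB : ∀ b, mulB (b ⊗ₜ[k] oneB) = b
  counit : ∀ b, (TensorProduct.rid k B) ((eps.lTensor B) (rho b)) = b
  coassoc : rho.rTensor H ∘ₗ rho
      = (TensorProduct.assoc k B H H).symm.toLinearMap ∘ₗ delta.lTensor B ∘ₗ rho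
  mul_compat : rho ∘ₗ mulB = (TensorProduct.map mulB mul)
      ∘ₗ (TensorProduct.tensorTensorTensorComm k B H B H).toLinearMap
      ∘ₗ (TensorProduct.map rho rho)
  one_compat : rho oneB = oneB ⊗ₜ[k] one

/-- The generic "action against `f : H → B'` after the coaction" endomorphism; for
`f = h ∘ λ` this is the canonical idempotent `q` of the paper. -/
def act {M B' : Type} [AddCommGroup M] [Module k M] [AddCommGroup B'] [Module k B']
    (phi : M ⊗[k] B' →ₗ[k] M) (rho : M →ₗ[k] M ⊗[k] H) (f : H →ₗ[k] B') : M →ₗ[k] M :=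
  phi ∘ₗ f.lTensor M ∘ₗ rho

/-- An anchor morphism `h : H → B`: a multiplicative total integral (a morphism of unital
magmas and of right `H`-comodules) satisfying the two cancellation conditions (c1), (c2). -/
structure IsAnchor (mul : H ⊗[k] H →ₗ[k] H) (one : H)
    (eps : H →ₗ[k] k) (delta : H →ₗ[k] H ⊗[k] H) (lam : H →ₗ[k] H)
    {B : Type} [AddCommGroup B] [Module k B]
    (mulB : B ⊗[k] B →ₗ[k] B) (oneB : B) (rho : B →ₗ[k] B ⊗[k] H)
    (h : H →ₗ[k] B) : Prop where
  comod : rho ∘ₗ h = h.rTensor H ∘ₗ delta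
  unit : h one = oneB
  mul_morph : mulB ∘ₗ TensorProduct.map h h = h ∘ₗ mul
  c1 : mulB ∘ₗ (TensorProduct.map (mulB ∘ₗ h.lTensor B) (h ∘ₗ lam))
      ∘ₗ (TensorProduct.assoc k B H H).symm.toLinearMap ∘ₗ delta.lTensor B
      = (TensorProduct.rid k B).toLinearMap ∘ₗ eps.lTensor B
  c2 : mulB ∘ₗ (TensorProduct.map (mulB ∘ₗ (h ∘ₗ lam).lTensor B) h)
      ∘ₗ (TensorProduct.assoc k B H H).symm.toLinearMap ∘ₗ delta.lTensor B
      = (TensorProduct.rid k B).toLinearMap ∘ₗ eps.lTensor B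

/-- A strong `(H,B,h)`-Hopf module: a right `H`-comodule `M` with an action
`phiM : M ⊗ B → M` satisfying the axioms (d2-1)–(d2-5) of the paper (unit action,
restricted associativity over the coinvariants of `B`, Hopf compatibility, and the
two quasigroup cancellation laws involving `h` and the antipode). -/
structure IsStrongHopfModule (mul : H ⊗[k] H →ₗ[k] H) (one : H)
    (eps : H →ₗ[k] k) (delta : H →ₗ[k] H ⊗[k] H) (lam : H →ₗ[k] H)
    {B : Type} [AddCommGroup B] [Module k B]
    (mulB : B ⊗[k] B →ₗ[k] B) (oneB : B) (rhoB : B →ₗ[k] B ⊗[k] H)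
    (h : H →ₗ[k] B)
    {M : Type} [AddCommGroup M] [Module k M]
    (phiM : M ⊗[k] B →ₗ[k] M) (rhoM : M →ₗ[k] M ⊗[k] H) : Prop where
  counit : ∀ m, (TensorProduct.rid k M) ((eps.lTensor M) (rhoM m)) = m
  coassoc : rhoM.rTensor H ∘ₗ rhoM
      = (TensorProduct.assoc k M H H).symm.toLinearMap ∘ₗ delta.lTensor M ∘ₗ rhoM
  act_one : ∀ m, phiM (m ⊗ₜ[k] oneB) = m
  act_coinv : ∀ (m : M) (c b : B), rhoB c = c ⊗ₜ[k] one →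
      phiM (phiM (m ⊗ₜ[k] c) ⊗ₜ[k] b) = phiM (m ⊗ₜ[k] mulB (c ⊗ₜ[k] b))
  compat : rhoM ∘ₗ phiM = (TensorProduct.map phiM mul)
      ∘ₗ (TensorProduct.tensorTensorTensorComm k M H B H).toLinearMap
      ∘ₗ (TensorProduct.map rhoM rhoB)
  cancel₁ : phiM ∘ₗ (TensorProduct.map (phiM ∘ₗ h.lTensor M) (h ∘ₗ lam))
      ∘ₗ (TensorProduct.assoc k M H H).symm.toLinearMap ∘ₗ delta.lTensor M
      = (TensorProduct.rid k M).toLinearMap ∘ₗ eps.lTensor M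
  cancel₂ : phiM ∘ₗ (TensorProduct.map (phiM ∘ₗ (h ∘ₗ lam).lTensor M) h)
      ∘ₗ (TensorProduct.assoc k M H H).symm.toLinearMap ∘ₗ delta.lTensor M
      = (TensorProduct.rid k M).toLinearMap ∘ₗ eps.lTensor M

variable (B : Type) [AddCommGroup B] [Module k B]
variable (mul : H ⊗[k] H →ₗ[k] H) (one : H) (eps : H →ₗ[k] k)
variable (delta : H →ₗ[k] H ⊗[k] H) (lam : H →ₗ[k] H)
variable (mulB : B ⊗[k] B →ₗ[k] B) (oneB : B) (rho : B →ₗ[k] B ⊗[k] H)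
variable (h : H →ₗ[k] B)

variable (M : Type) [AddCommGroup M] [Module k M]
variable (phiM : M ⊗[k] B →ₗ[k] M) (rhoM : M →ₗ[k] M ⊗[k] H)


section AuxDefs

/-- Componentwise multiplication on `H ⊗ H`. -/
private def M2m : (H ⊗[k] H) ⊗[k] (H ⊗[k] H) →ₗ[k] H ⊗[k] H :=
  (TensorProduct.map mul mul) ∘ₗ (TensorProduct.tensorTensorTensorComm k H H H H).toLinearMap

/-- The candidate anticomultiplied antipode `x ↦ λ(x₂) ⊗ λ(x₁)`. -/
private def Gm : H →ₗ[k] H ⊗[k] H :=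
  (TensorProduct.comm k H H).toLinearMap ∘ₗ (TensorProduct.map lam lam) ∘ₗ delta

private lemma M2m_tmul (a b c d : H) :
    M2m k H mul ((a ⊗ₜ[k] b) ⊗ₜ[k] (c ⊗ₜ[k] d)) = mul (a ⊗ₜ[k] c) ⊗ₜ[k] mul (b ⊗ₜ[k] d) := by
  simp [M2m]

private lemma coassoc_pt (hH : IsHopfQuasigroup k H mul one eps delta lam) (x : H) :
    (TensorProduct.assoc k H H H) ((delta.rTensor H) (delta x))
      = (delta.lTensor H) (delta x) := by
  simpa using LinearMap.congr_fun hH.coassoc x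

private lemma counit_left_rep (hH : IsHopfQuasigroup k H mul one eps delta lam)
    {x : H} {s : Finset (H × H)} (hs : delta x = ∑ p ∈ s, p.1 ⊗ₜ[k] p.2) :
    ∑ p ∈ s, eps p.1 • p.2 = x := by
  have h1 := hH.counit_left x
  rw [hs] at h1
  simpa [map_sum] using h1

private lemma counit_right_rep (hH : IsHopfQuasigroup k H mul one eps delta lam)
    {x : H} {s : Finset (H × H)} (hs : delta x = ∑ p ∈ s, p.1 ⊗ₜ[k] p.2) :
    ∑ p ∈ s, eps p.2 • p.1 = x := by
  have h1 := hH.counit_right x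
  rw [hs] at h1
  simpa [map_sum] using h1

/-- Pointwise form of `(v·x₁)·λ(x₂) = ε(x) v`. -/
private lemma cancel_right_pt (hH : IsHopfQuasigroup k H mul one eps delta lam) (v x : H) :
    mul ((TensorProduct.map (mul ∘ₗ TensorProduct.mk k H H v) lam) (delta x)) = eps x • v := by
  have h1 := LinearMap.congr_fun hH.antipode_right₁ (v ⊗ₜ[k] x)
  obtain ⟨s, hs⟩ := TensorProduct.exists_finset (delta x)
  rw [hs]
  simp only [LinearMap.coe_comp, Function.comp_apply, LinearEquiv.coe_coe,
    LinearMap.lTensor_tmul, hs, tmul_sum, map_sum,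
    assoc_symm_tmul, map_tmul, TensorProduct.mk_apply, TensorProduct.lid_tmul,
    TensorProduct.rid_tmul] at h1 ⊢
  exact h1

/-- Pointwise form of `x₁·λ(x₂) = ε(x) 1`. -/
private lemma mul_lamL_pt (hH : IsHopfQuasigroup k H mul one eps delta lam) (x : H) :
    mul ((lam.lTensor H) (delta x)) = eps x • one := by
  have h1 := LinearMap.congr_fun hH.antipode_right₁ (one ⊗ₜ[k] x)
  obtain ⟨s, hs⟩ := TensorProduct.exists_finset (delta x)
  rw [hs]
  simp only [LinearMap.coe_comp, Function.comp_apply, LinearEquiv.coe_coe,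
    LinearMap.lTensor_tmul, hs, tmul_sum, map_sum,
    assoc_symm_tmul, map_tmul, hH.one_mul, TensorProduct.rid_tmul] at h1 ⊢
  exact h1

/-- Pointwise form of `λ(x₁)·x₂ = ε(x) 1`. -/
private lemma mul_lamR_pt (hH : IsHopfQuasigroup k H mul one eps delta lam) (x : H) :
    mul ((lam.rTensor H) (delta x)) = eps x • one := by
  have h1 := LinearMap.congr_fun hH.antipode_left₁ (x ⊗ₜ[k] one)
  obtain ⟨s, hs⟩ := TensorProduct.exists_finset (delta x)
  rw [hs]
  simp only [LinearMap.coe_comp, Function.comp_apply, LinearEquiv.coe_coe,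
    LinearMap.rTensor_tmul, hs, sum_tmul, map_sum, assoc_tmul,
    map_tmul, hH.mul_one, TensorProduct.lid_tmul] at h1 ⊢
  exact h1

private lemma lam_one (hH : IsHopfQuasigroup k H mul one eps delta lam) :
    lam one = one := by
  have h1 := mul_lamR_pt k H mul one eps delta lam hH one
  rw [hH.delta_one] at h1
  simpa [hH.mul_one, hH.eps_one] using h1

private lemma M2m_one (hH : IsHopfQuasigroup k H mul one eps delta lam) (v : H ⊗[k] H) :
    M2m k H mul ((one ⊗ₜ[k] one) ⊗ₜ[k] v) = v := by
  induction v using TensorProduct.induction_on with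
  | zero => simp
  | tmul c d => rw [M2m_tmul]; rw [hH.one_mul, hH.one_mul]
  | add u w hu hw => rw [tmul_add, map_add, hu, hw]

private lemma delta_mul_pt (hH : IsHopfQuasigroup k H mul one eps delta lam) (u v : H) :
    delta (mul (u ⊗ₜ[k] v)) = M2m k H mul (delta u ⊗ₜ[k] delta v) := by
  have h1 := LinearMap.congr_fun hH.delta_mul (u ⊗ₜ[k] v)
  simpa [M2m] using h1

private lemma Gm_rep {x : H} {s : Finset (H × H)}
    (hs : delta x = ∑ p ∈ s, p.1 ⊗ₜ[k] p.2) :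
    Gm k H delta lam x = ∑ p ∈ s, lam p.2 ⊗ₜ[k] lam p.1 := by
  simp [Gm, hs, map_sum]

end AuxDefs


section ACM

/-- `w ⊗ (e ⊗ f) ↦ (w · δe) ·₂ G f` (componentwise products in `H ⊗ H`). -/
private def innerM : (H ⊗[k] H) ⊗[k] (H ⊗[k] H) →ₗ[k] H ⊗[k] H :=
  M2m k H mul ∘ₗ (TensorProduct.map (M2m k H mul) LinearMap.id)
    ∘ₗ (TensorProduct.assoc k (H ⊗[k] H) (H ⊗[k] H) (H ⊗[k] H)).symm.toLinearMap
    ∘ₗ (LinearMap.lTensor (H ⊗[k] H) (TensorProduct.map delta (Gm k H delta lam)))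

private lemma innerM_tmul (w : H ⊗[k] H) (e f : H) :
    innerM k H mul delta lam (w ⊗ₜ[k] (e ⊗ₜ[k] f))
      = M2m k H mul ((M2m k H mul (w ⊗ₜ[k] delta e)) ⊗ₜ[k] Gm k H delta lam f) := by
  simp [innerM]

private def PsiM : (H ⊗[k] H) ⊗[k] H →ₗ[k] H ⊗[k] H :=
  innerM k H mul delta lam ∘ₗ (LinearMap.lTensor (H ⊗[k] H) delta)

private def Nm (c v : H) : H ⊗[k] (H ⊗[k] H) →ₗ[k] H ⊗[k] H :=
  (TensorProduct.comm k H H).toLinearMap ∘ₗ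
    (TensorProduct.map (mul ∘ₗ (TensorProduct.map (mul ∘ₗ TensorProduct.mk k H H v) lam))
      (mul ∘ₗ (TensorProduct.mk k H H c) ∘ₗ lam)) ∘ₗ
    (TensorProduct.assoc k H H H).symm.toLinearMap

private lemma Nm_tmul (c v α β γ : H) :
    Nm k H mul lam c v (α ⊗ₜ[k] (β ⊗ₜ[k] γ))
      = mul (c ⊗ₜ[k] lam γ) ⊗ₜ[k] mul (mul (v ⊗ₜ[k] α) ⊗ₜ[k] lam β) := by
  simp [Nm]

private def Om (u v : H) : H ⊗[k] (H ⊗[k] H) →ₗ[k] H ⊗[k] H :=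
  M2m k H mul ∘ₗ
    (TensorProduct.map
      (TensorProduct.map (mul ∘ₗ TensorProduct.mk k H H u) (mul ∘ₗ TensorProduct.mk k H H v))
      (Gm k H delta lam)) ∘ₗ
    (TensorProduct.assoc k H H H).symm.toLinearMap

private lemma Om_tmul (u v e z w : H) :
    Om k H mul delta lam u v (e ⊗ₜ[k] (z ⊗ₜ[k] w))
      = M2m k H mul ((mul (u ⊗ₜ[k] e) ⊗ₜ[k] mul (v ⊗ₜ[k] z)) ⊗ₜ[k] Gm k H delta lam w) := by
  simp [Om]

private lemma Om_delta (hH : IsHopfQuasigroup k H mul one eps delta lam) (u v e f : H) :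
    Om k H mul delta lam u v (e ⊗ₜ[k] delta f)
      = mul (mul (u ⊗ₜ[k] e) ⊗ₜ[k] lam f) ⊗ₜ[k] v := by
  set c := mul (u ⊗ₜ[k] e) with hc
  obtain ⟨s, hs⟩ := TensorProduct.exists_finset (delta f)
  have step1 : Om k H mul delta lam u v (e ⊗ₜ[k] delta f)
      = Nm k H mul lam c v ((delta.lTensor H) (delta f)) := by
    rw [hs]
    simp only [tmul_sum, map_sum, LinearMap.lTensor_tmul]
    refine Finset.sum_congr rfl fun p _ => ?_
    obtain ⟨s2, hs2⟩ := TensorProduct.exists_finset (delta p.2)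
    rw [Om_tmul, Gm_rep k H delta lam hs2, hs2]
    simp only [tmul_sum, map_sum, M2m_tmul, Nm_tmul, ← hc]
  rw [step1, ← coassoc_pt k H mul one eps delta lam hH f, hs]
  simp only [map_sum, LinearMap.rTensor_tmul]
  have step2 : ∀ p ∈ s,
      Nm k H mul lam c v ((TensorProduct.assoc k H H H) ((delta p.1) ⊗ₜ[k] p.2))
        = eps p.1 • (mul (c ⊗ₜ[k] lam p.2) ⊗ₜ[k] v) := by
    intro p _
    obtain ⟨s3, hs3⟩ := TensorProduct.exists_finset (delta p.1)
    rw [hs3]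
    simp only [sum_tmul, map_sum, assoc_tmul, Nm_tmul]
    rw [← tmul_sum]
    have h2 := cancel_right_pt k H mul one eps delta lam hH v p.1
    rw [hs3] at h2
    simp only [map_sum, map_tmul, LinearMap.coe_comp, Function.comp_apply,
      TensorProduct.mk_apply] at h2
    rw [h2, tmul_smul]
  rw [Finset.sum_congr rfl step2]
  let J : H →ₗ[k] H ⊗[k] H :=
    ((TensorProduct.mk k H H).flip v) ∘ₗ mul ∘ₗ (TensorProduct.mk k H H c) ∘ₗ lam
  have hJ : ∀ y : H, J y = mul (c ⊗ₜ[k] lam y) ⊗ₜ[k] v := fun y => by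
    simp [J]
  calc ∑ p ∈ s, eps p.1 • (mul (c ⊗ₜ[k] lam p.2) ⊗ₜ[k] v)
      = J (∑ p ∈ s, eps p.1 • p.2) := by
        rw [map_sum]
        exact Finset.sum_congr rfl fun p _ => by rw [map_smul, hJ]
    _ = mul (c ⊗ₜ[k] lam f) ⊗ₜ[k] v := by
        rw [counit_left_rep k H mul one eps delta lam hH hs, hJ]

private lemma Psi_apply (hH : IsHopfQuasigroup k H mul one eps delta lam)
    (w : H ⊗[k] H) (b : H) :
    PsiM k H mul delta lam (w ⊗ₜ[k] b) = eps b • w := by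
  induction w using TensorProduct.induction_on with
  | zero => simp
  | add u w hu hw => rw [add_tmul, map_add, hu, hw, smul_add]
  | tmul u v =>
    have e0 : PsiM k H mul delta lam ((u ⊗ₜ[k] v) ⊗ₜ[k] b)
        = innerM k H mul delta lam ((u ⊗ₜ[k] v) ⊗ₜ[k] delta b) := by
      simp [PsiM]
    obtain ⟨s, hs⟩ := TensorProduct.exists_finset (delta b)
    let Y : (H ⊗[k] H) ⊗[k] H →ₗ[k] H ⊗[k] H :=
      M2m k H mul ∘ₗ (TensorProduct.map
        (M2m k H mul ∘ₗ (TensorProduct.mk k (H ⊗[k] H) (H ⊗[k] H) (u ⊗ₜ[k] v)))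
        (Gm k H delta lam))
    have e1 : innerM k H mul delta lam ((u ⊗ₜ[k] v) ⊗ₜ[k] delta b)
        = Y ((delta.rTensor H) (delta b)) := by
      rw [hs]
      simp only [tmul_sum, map_sum, LinearMap.rTensor_tmul]
      exact Finset.sum_congr rfl fun p _ => by rw [innerM_tmul]; simp [Y]
    have e2 : (delta.rTensor H) (delta b)
        = (TensorProduct.assoc k H H H).symm ((delta.lTensor H) (delta b)) := by
      rw [← coassoc_pt k H mul one eps delta lam hH b]
      simp
    rw [e0, e1, e2, hs]
    simp only [map_sum, LinearMap.lTensor_tmul]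
    have e3 : ∀ p ∈ s,
        Y ((TensorProduct.assoc k H H H).symm (p.1 ⊗ₜ[k] delta p.2))
          = mul (mul (u ⊗ₜ[k] p.1) ⊗ₜ[k] lam p.2) ⊗ₜ[k] v := by
      intro p _
      rw [← Om_delta k H mul one eps delta lam hH u v p.1 p.2]
      obtain ⟨s2, hs2⟩ := TensorProduct.exists_finset (delta p.2)
      rw [hs2]
      simp only [tmul_sum, map_sum, assoc_symm_tmul]
      refine Finset.sum_congr rfl fun q _ => ?_
      rw [Om_tmul]
      simp [Y, M2m_tmul]
    rw [Finset.sum_congr rfl e3, ← sum_tmul]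
    have h2 := cancel_right_pt k H mul one eps delta lam hH u b
    rw [hs] at h2
    simp only [map_sum, map_tmul, LinearMap.coe_comp, Function.comp_apply,
      TensorProduct.mk_apply] at h2
    rw [h2, smul_tmul']

private def PhiM : H ⊗[k] (H ⊗[k] H) →ₗ[k] H ⊗[k] H :=
  innerM k H mul delta lam ∘ₗ
    (TensorProduct.map (delta ∘ₗ lam) (LinearMap.id : H ⊗[k] H →ₗ[k] H ⊗[k] H))

private lemma lam_anticomul (hH : IsHopfQuasigroup k H mul one eps delta lam) (x : H) :
    delta (lam x) = Gm k H delta lam x := by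
  obtain ⟨s, hs⟩ := TensorProduct.exists_finset (delta x)
  have way1 : ∑ p ∈ s, M2m k H mul
        ((delta (mul ((lam.rTensor H) (delta p.1)))) ⊗ₜ[k] Gm k H delta lam p.2)
      = Gm k H delta lam x := by
    have t1 : ∀ p ∈ s, M2m k H mul
        ((delta (mul ((lam.rTensor H) (delta p.1)))) ⊗ₜ[k] Gm k H delta lam p.2)
        = eps p.1 • Gm k H delta lam p.2 := by
      intro p _
      rw [mul_lamR_pt k H mul one eps delta lam hH p.1, map_smul, hH.delta_one,
        ← smul_tmul', map_smul, M2m_one k H mul one eps delta lam hH]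
    rw [Finset.sum_congr rfl t1]
    calc ∑ p ∈ s, eps p.1 • Gm k H delta lam p.2
        = Gm k H delta lam (∑ p ∈ s, eps p.1 • p.2) := by
          rw [map_sum]; exact Finset.sum_congr rfl fun p _ => (map_smul _ _ _).symm
      _ = Gm k H delta lam x := by rw [counit_left_rep k H mul one eps delta lam hH hs]
  have way2 : ∑ p ∈ s, M2m k H mul
        ((delta (mul ((lam.rTensor H) (delta p.1)))) ⊗ₜ[k] Gm k H delta lam p.2)
      = delta (lam x) := by
    have t2 : ∀ p ∈ s, M2m k H mul
        ((delta (mul ((lam.rTensor H) (delta p.1)))) ⊗ₜ[k] Gm k H delta lam p.2)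
        = PhiM k H mul delta lam ((TensorProduct.assoc k H H H) ((delta p.1) ⊗ₜ[k] p.2)) := by
      intro p _
      obtain ⟨t, ht⟩ := TensorProduct.exists_finset (delta p.1)
      rw [ht]
      simp only [map_sum, LinearMap.rTensor_tmul, sum_tmul, assoc_tmul]
      refine Finset.sum_congr rfl fun q _ => ?_
      rw [delta_mul_pt k H mul one eps delta lam hH (lam q.1) q.2]
      simp only [PhiM, LinearMap.coe_comp, Function.comp_apply, map_tmul,
        LinearMap.id_coe, id_eq, innerM_tmul]
    rw [Finset.sum_congr rfl t2]
    have t3 : ∑ p ∈ s, PhiM k H mul delta lam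
          ((TensorProduct.assoc k H H H) ((delta p.1) ⊗ₜ[k] p.2))
        = PhiM k H mul delta lam ((delta.lTensor H) (delta x)) := by
      rw [← coassoc_pt k H mul one eps delta lam hH x, hs]
      simp only [map_sum, LinearMap.rTensor_tmul]
    rw [t3, hs]
    simp only [map_sum, LinearMap.lTensor_tmul]
    have t4 : ∀ p ∈ s, PhiM k H mul delta lam (p.1 ⊗ₜ[k] delta p.2)
        = eps p.2 • delta (lam p.1) := by
      intro p _
      have e : PhiM k H mul delta lam (p.1 ⊗ₜ[k] delta p.2)
          = PsiM k H mul delta lam ((delta (lam p.1)) ⊗ₜ[k] p.2) := by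
        simp [PhiM, PsiM]
      rw [e, Psi_apply k H mul one eps delta lam hH]
    rw [Finset.sum_congr rfl t4]
    have t5 : delta (lam (∑ p ∈ s, eps p.2 • p.1))
        = ∑ p ∈ s, eps p.2 • delta (lam p.1) := by
      simp [map_sum, map_smul]
    rw [counit_right_rep k H mul one eps delta lam hH hs] at t5
    exact t5.symm
  exact way2.symm.trans way1

end ACM

/-- For a Hopf quasigroup `H`, a right `H`-comodule magma `B`, an anchor morphism
`h : H → B` and a strong `(H,B,h)`-Hopf module `M`, the endomorphism
`q_M(m) = φ_M(m₍₀₎ ⊗ h(λ(m₍₁₎)))` is idempotent and `ρ_M(q_M m) = q_M m ⊗ 1_H`. -/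
theorem qM_idempotent_and_coinvariant
    (hH : IsHopfQuasigroup k H mul one eps delta lam)
    (hB : IsComoduleMagma k H mul one eps delta mulB oneB rho)
    (hA : IsAnchor k H mul one eps delta lam mulB oneB rho h)
    (hM : IsStrongHopfModule k H mul one eps delta lam mulB oneB rho h phiM rhoM) :
    act k H phiM rhoM (h ∘ₗ lam) ∘ₗ act k H phiM rhoM (h ∘ₗ lam)
        = act k H phiM rhoM (h ∘ₗ lam) ∧
    ∀ m : M, rhoM (act k H phiM rhoM (h ∘ₗ lam) m)
        = act k H phiM rhoM (h ∘ₗ lam) m ⊗ₜ[k] one := by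
  have coinv : ∀ m : M, rhoM (act k H phiM rhoM (h ∘ₗ lam) m)
      = act k H phiM rhoM (h ∘ₗ lam) m ⊗ₜ[k] one := by
    intro m
    obtain ⟨s, hs⟩ := TensorProduct.exists_finset (rhoM m)
    have hq : act k H phiM rhoM (h ∘ₗ lam) m
        = ∑ p ∈ s, phiM (p.1 ⊗ₜ[k] h (lam p.2)) := by
      simp [act, hs, map_sum]
    let Th : (M ⊗[k] H) ⊗[k] (B ⊗[k] H) →ₗ[k] M ⊗[k] H :=
      (TensorProduct.map phiM mul) ∘ₗ (TensorProduct.tensorTensorTensorComm k M H B H).toLinearMap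
    let Xi : (M ⊗[k] H) ⊗[k] H →ₗ[k] M ⊗[k] H :=
      Th ∘ₗ (LinearMap.lTensor (M ⊗[k] H) (rho ∘ₗ h ∘ₗ lam))
    have key : ∀ (m' : M) (x : H),
        Xi ((TensorProduct.assoc k M H H).symm (m' ⊗ₜ[k] delta x))
          = phiM (m' ⊗ₜ[k] h (lam x)) ⊗ₜ[k] one := by
      intro m' x
      obtain ⟨s2, hs2⟩ := TensorProduct.exists_finset (delta x)
      let Lm : H ⊗[k] (H ⊗[k] H) →ₗ[k] M ⊗[k] H :=
        (TensorProduct.comm k H M).toLinearMap ∘ₗ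
          (TensorProduct.map (mul ∘ₗ (lam.lTensor H))
            (phiM ∘ₗ (TensorProduct.mk k M B m') ∘ₗ h ∘ₗ lam)) ∘ₗ
          (TensorProduct.assoc k H H H).symm.toLinearMap
      have Lm_tmul : ∀ a b c' : H, Lm (a ⊗ₜ[k] (b ⊗ₜ[k] c'))
          = phiM (m' ⊗ₜ[k] h (lam c')) ⊗ₜ[k] mul (a ⊗ₜ[k] lam b) := by
        intro a b c'; simp [Lm]
      have k1 : Xi ((TensorProduct.assoc k M H H).symm (m' ⊗ₜ[k] delta x))
          = Lm ((delta.lTensor H) (delta x)) := by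
        rw [hs2]
        simp only [tmul_sum, map_sum, assoc_symm_tmul, LinearMap.lTensor_tmul]
        refine Finset.sum_congr rfl fun p _ => ?_
        have hr : rho (h (lam p.2)) = (h.rTensor H) (Gm k H delta lam p.2) := by
          have hcm := LinearMap.congr_fun hA.comod (lam p.2)
          simp only [LinearMap.coe_comp, Function.comp_apply] at hcm
          rw [hcm, lam_anticomul k H mul one eps delta lam hH p.2]
        obtain ⟨s3, hs3⟩ := TensorProduct.exists_finset (delta p.2)
        have hx : Xi ((m' ⊗ₜ[k] p.1) ⊗ₜ[k] p.2)
            = Th ((m' ⊗ₜ[k] p.1) ⊗ₜ[k] rho (h (lam p.2))) := by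
          simp [Xi]
        rw [hx, hr, Gm_rep k H delta lam hs3, hs3]
        simp only [map_sum, tmul_sum]
        refine Finset.sum_congr rfl fun q _ => ?_
        rw [Lm_tmul]
        simp [Th]
      rw [k1, ← coassoc_pt k H mul one eps delta lam hH x, hs2]
      simp only [map_sum, LinearMap.rTensor_tmul]
      have k3 : ∀ p ∈ s2, Lm ((TensorProduct.assoc k H H H) ((delta p.1) ⊗ₜ[k] p.2))
          = eps p.1 • (phiM (m' ⊗ₜ[k] h (lam p.2)) ⊗ₜ[k] one) := by
        intro p _
        obtain ⟨s4, hs4⟩ := TensorProduct.exists_finset (delta p.1)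
        rw [hs4]
        simp only [sum_tmul, map_sum, assoc_tmul, Lm_tmul]
        rw [← tmul_sum]
        have h2 := mul_lamL_pt k H mul one eps delta lam hH p.1
        rw [hs4] at h2
        simp only [map_sum, LinearMap.lTensor_tmul] at h2
        rw [h2, tmul_smul]
      rw [Finset.sum_congr rfl k3]
      let J : H →ₗ[k] M ⊗[k] H :=
        ((TensorProduct.mk k M H).flip one) ∘ₗ phiM ∘ₗ (TensorProduct.mk k M B m') ∘ₗ h ∘ₗ lam
      have hJ : ∀ y : H, J y = phiM (m' ⊗ₜ[k] h (lam y)) ⊗ₜ[k] one := fun y => by simp [J]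
      calc ∑ p ∈ s2, eps p.1 • (phiM (m' ⊗ₜ[k] h (lam p.2)) ⊗ₜ[k] one)
          = J (∑ p ∈ s2, eps p.1 • p.2) := by
            rw [map_sum]; exact Finset.sum_congr rfl fun p _ => by rw [map_smul, hJ]
        _ = phiM (m' ⊗ₜ[k] h (lam x)) ⊗ₜ[k] one := by
            rw [counit_left_rep k H mul one eps delta lam hH hs2, hJ]
    have e1 : rhoM (act k H phiM rhoM (h ∘ₗ lam) m) = Xi ((rhoM.rTensor H) (rhoM m)) := by
      rw [hq, map_sum, hs]
      simp only [map_sum, LinearMap.rTensor_tmul]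
      refine Finset.sum_congr rfl fun p _ => ?_
      have hcp := LinearMap.congr_fun hM.compat (p.1 ⊗ₜ[k] h (lam p.2))
      simp only [LinearMap.coe_comp, Function.comp_apply, map_tmul] at hcp
      rw [hcp]
      simp [Xi, Th]
    have e2 : (rhoM.rTensor H) (rhoM m)
        = (TensorProduct.assoc k M H H).symm ((delta.lTensor M) (rhoM m)) := by
      simpa using LinearMap.congr_fun hM.coassoc m
    rw [e1, e2, hs]
    simp only [map_sum, LinearMap.lTensor_tmul]
    rw [hq, sum_tmul]
    exact Finset.sum_congr rfl fun p _ => key p.1 p.2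
  refine ⟨?_, coinv⟩
  apply LinearMap.ext
  intro m
  have hunf : act k H phiM rhoM (h ∘ₗ lam) (act k H phiM rhoM (h ∘ₗ lam) m)
      = phiM (((h ∘ₗ lam).lTensor M) (rhoM (act k H phiM rhoM (h ∘ₗ lam) m))) := by
    simp [act]
  rw [LinearMap.comp_apply, hunf, coinv m]
  simp only [LinearMap.lTensor_tmul, LinearMap.coe_comp, Function.comp_apply]
  rw [lam_one k H mul one eps delta lam hH, hA.unit, hM.act_one]
end DoiHopf
end
end

section
/- Let H be a Hopf quasigroup over k, B a right H-comodule magma, h: H → B an anchor morphism, and (M, φ_M, ρ_M) a strong (H,B,h)-Hopf module. Then φ_M(q_M(m_[0]) ⊗ h(m_[1])) = m for all m ∈ M, where q_M(m) = φ_M(m_[0] ⊗ h(λ(m_[1]))). -/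
open TensorProduct

noncomputable section

namespace DoiHopf

variable (k : Type) [Field k]
variable (H : Type) [AddCommGroup H] [Module k H]

variable (B : Type) [AddCommGroup B] [Module k B]
variable (mul : H ⊗[k] H →ₗ[k] H) (one : H) (eps : H →ₗ[k] k)
variable (delta : H →ₗ[k] H ⊗[k] H) (lam : H →ₗ[k] H)
variable (mulB : B ⊗[k] B →ₗ[k] B) (oneB : B) (rho : B →ₗ[k] B ⊗[k] H)
variable (h : H →ₗ[k] B)

variable (M : Type) [AddCommGroup M] [Module k M]
variable (phiM : M ⊗[k] B →ₗ[k] M) (rhoM : M →ₗ[k] M ⊗[k] H)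

/-- For a Hopf quasigroup `H`, a right `H`-comodule magma `B`, an anchor morphism
`h : H → B` and a strong `(H,B,h)`-Hopf module `M`,
`φ_M(q_M(m₍₀₎) ⊗ h(m₍₁₎)) = m` for every `m`, where `q_M(m) = φ_M(m₍₀₎ ⊗ h(λ(m₍₁₎)))`. -/
theorem phiM_qM_h_rho
    (hH : IsHopfQuasigroup k H mul one eps delta lam)
    (hB : IsComoduleMagma k H mul one eps delta mulB oneB rho)
    (hA : IsAnchor k H mul one eps delta lam mulB oneB rho h)
    (hM : IsStrongHopfModule k H mul one eps delta lam mulB oneB rho h phiM rhoM) :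
    phiM ∘ₗ (TensorProduct.map (act k H phiM rhoM (h ∘ₗ lam)) h) ∘ₗ rhoM
      = LinearMap.id := by
  have e2 : TensorProduct.map (act k H phiM rhoM (h ∘ₗ lam)) h
      = (TensorProduct.map (phiM ∘ₗ (h ∘ₗ lam).lTensor M) h) ∘ₗ (rhoM.rTensor H) := by
    rw [show act k H phiM rhoM (h ∘ₗ lam)
        = (phiM ∘ₗ (h ∘ₗ lam).lTensor M) ∘ₗ rhoM from (LinearMap.comp_assoc _ _ _).symm]
    conv_lhs => rw [← LinearMap.comp_id h]
    rw [TensorProduct.map_comp]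
    rfl
  have key : phiM ∘ₗ (TensorProduct.map (act k H phiM rhoM (h ∘ₗ lam)) h) ∘ₗ rhoM
      = (TensorProduct.rid k M).toLinearMap ∘ₗ eps.lTensor M ∘ₗ rhoM := by
    rw [e2, LinearMap.comp_assoc, hM.coassoc]
    simp only [← LinearMap.comp_assoc]
    rw [show ((phiM ∘ₗ TensorProduct.map (phiM ∘ₗ (h ∘ₗ lam).lTensor M) h)
          ∘ₗ (TensorProduct.assoc k M H H).symm.toLinearMap) ∘ₗ delta.lTensor M
        = phiM ∘ₗ (TensorProduct.map (phiM ∘ₗ (h ∘ₗ lam).lTensor M) h)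
          ∘ₗ (TensorProduct.assoc k M H H).symm.toLinearMap ∘ₗ delta.lTensor M by
        simp only [LinearMap.comp_assoc], hM.cancel₂]
  rw [key]
  ext m
  simpa using hM.counit m
end DoiHopf
end
end

section
/- Let H be a Hopf quasigroup over k, B a right H-comodule magma satisfying conditions (39) and (42) (i.e., (b·i_B(c))·b' = b·(i_B(c)·b') and i_B(c)·(b·b') = (i_B(c)·b)·b' for all c ∈ B^{coH}, b, b' ∈ B), and h: H → B an anchor morphism. Then the coinvariant subspace B^{coH} = {b ∈ B : ρ_B(b) = b ⊗ 1_H} is an associative unital algebra under the restricted product of B. -/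
open TensorProduct

noncomputable section

namespace DoiHopf

variable (k : Type) [Field k]
variable (H : Type) [AddCommGroup H] [Module k H]

variable (B : Type) [AddCommGroup B] [Module k B]
variable (mul : H ⊗[k] H →ₗ[k] H) (one : H) (eps : H →ₗ[k] k)
variable (delta : H →ₗ[k] H ⊗[k] H) (lam : H →ₗ[k] H)
variable (mulB : B ⊗[k] B →ₗ[k] B) (oneB : B) (rho : B →ₗ[k] B ⊗[k] H)
variable (h : H →ₗ[k] B)

/-- For a Hopf quasigroup `H`, a right `H`-comodule magma `B` satisfying the two
strongness (mixed associativity) conditions over coinvariant elements, and an anchor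
morphism `h : H → B`, the coinvariant subspace `B^{coH} = {b : ρ_B b = b ⊗ 1}` is an
associative unital algebra under the restricted product of `B`: the unit of `B` is
coinvariant, `B^{coH}` is closed under the product, and the product is associative on
coinvariants. -/
theorem coinvariants_monoid
    (hH : IsHopfQuasigroup k H mul one eps delta lam)
    (hB : IsComoduleMagma k H mul one eps delta mulB oneB rho)
    (hA : IsAnchor k H mul one eps delta lam mulB oneB rho h)
    (hs1 : ∀ c b b' : B, rho c = c ⊗ₜ[k] one →
        mulB (mulB (b ⊗ₜ[k] c) ⊗ₜ[k] b') = mulB (b ⊗ₜ[k] mulB (c ⊗ₜ[k] b')))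
    (hs2 : ∀ c b b' : B, rho c = c ⊗ₜ[k] one →
        mulB (c ⊗ₜ[k] mulB (b ⊗ₜ[k] b')) = mulB (mulB (c ⊗ₜ[k] b) ⊗ₜ[k] b')) :
    rho oneB = oneB ⊗ₜ[k] one ∧
    (∀ b c : B, rho b = b ⊗ₜ[k] one → rho c = c ⊗ₜ[k] one →
        rho (mulB (b ⊗ₜ[k] c)) = mulB (b ⊗ₜ[k] c) ⊗ₜ[k] one) ∧
    (∀ a b c : B, rho a = a ⊗ₜ[k] one → rho b = b ⊗ₜ[k] one → rho c = c ⊗ₜ[k] one →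
        mulB (mulB (a ⊗ₜ[k] b) ⊗ₜ[k] c) = mulB (a ⊗ₜ[k] mulB (b ⊗ₜ[k] c))) := by
  refine ⟨hB.one_compat, ?_, ?_⟩
  · intro b c hb hc
    have := congrArg (fun f => f (b ⊗ₜ[k] c)) hB.mul_compat
    simp only [LinearMap.comp_apply, TensorProduct.map_tmul,
      TensorProduct.tensorTensorTensorComm_tmul, hb, hc] at this
    rw [this]
    simp [TensorProduct.tensorTensorTensorComm_tmul, hH.one_mul]
  · intro a b c ha hb hc
    exact (hs2 a b c ha).symm
end DoiHopf
end
end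

section
/- Let H be a Hopf quasigroup over k, B a right H-comodule magma with the strongness conditions ((b·i_B(c))·b' = b·(i_B(c)·b') and i_B(c)·(b·b') = (i_B(c)·b)·b' for c ∈ B^{coH}), and h an anchor morphism. For every strong (H,B,h)-Hopf module M, the coinvariants M^{coH} = {m ∈ M : ρ_M(m) = m ⊗ 1_H} form a right module over the algebra B^{coH} via the restriction of φ_M. -/
open TensorProduct

noncomputable section

namespace DoiHopf

variable (k : Type) [Field k]
variable (H : Type) [AddCommGroup H] [Module k H]

variable (B : Type) [AddCommGroup B] [Module k B]
variable (mul : H ⊗[k] H →ₗ[k] H) (one : H) (eps : H →ₗ[k] k)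
variable (delta : H →ₗ[k] H ⊗[k] H) (lam : H →ₗ[k] H)
variable (mulB : B ⊗[k] B →ₗ[k] B) (oneB : B) (rho : B →ₗ[k] B ⊗[k] H)
variable (h : H →ₗ[k] B)

variable (M : Type) [AddCommGroup M] [Module k M]
variable (phiM : M ⊗[k] B →ₗ[k] M) (rhoM : M →ₗ[k] M ⊗[k] H)

/-- For a Hopf quasigroup `H`, a right `H`-comodule magma `B` with the strongness
conditions, an anchor morphism `h` and a strong `(H,B,h)`-Hopf module `M`, the
coinvariants `M^{coH} = {m : ρ_M m = m ⊗ 1}` form a right module over the algebra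
`B^{coH}` via the restriction of `φ_M`: the action of a coinvariant of `B` preserves
coinvariance of `M`, acts unitally, and is associative over coinvariants of `B`. -/
theorem coinvariants_module
    (hH : IsHopfQuasigroup k H mul one eps delta lam)
    (hB : IsComoduleMagma k H mul one eps delta mulB oneB rho)
    (hA : IsAnchor k H mul one eps delta lam mulB oneB rho h)
    (hs1 : ∀ c b b' : B, rho c = c ⊗ₜ[k] one →
        mulB (mulB (b ⊗ₜ[k] c) ⊗ₜ[k] b') = mulB (b ⊗ₜ[k] mulB (c ⊗ₜ[k] b')))
    (hs2 : ∀ c b b' : B, rho c = c ⊗ₜ[k] one →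
        mulB (c ⊗ₜ[k] mulB (b ⊗ₜ[k] b')) = mulB (mulB (c ⊗ₜ[k] b) ⊗ₜ[k] b'))
    (hM : IsStrongHopfModule k H mul one eps delta lam mulB oneB rho h phiM rhoM) :
    (∀ (m : M) (b : B), rhoM m = m ⊗ₜ[k] one → rho b = b ⊗ₜ[k] one →
        rhoM (phiM (m ⊗ₜ[k] b)) = phiM (m ⊗ₜ[k] b) ⊗ₜ[k] one) ∧
    (∀ m : M, phiM (m ⊗ₜ[k] oneB) = m) ∧
    (∀ (m : M) (c c' : B), rhoM m = m ⊗ₜ[k] one →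
        rho c = c ⊗ₜ[k] one → rho c' = c' ⊗ₜ[k] one →
        phiM (phiM (m ⊗ₜ[k] c) ⊗ₜ[k] c') = phiM (m ⊗ₜ[k] mulB (c ⊗ₜ[k] c'))) := by
  refine ⟨?_, hM.act_one, fun m c c' _ hc _ => hM.act_coinv m c c' hc⟩
  intro m b hm hb
  have := congrFun (congrArg DFunLike.coe hM.compat) (m ⊗ₜ[k] b)
  simp only [LinearMap.coe_comp, Function.comp_apply, TensorProduct.map_tmul] at this
  rw [this, hm, hb]
  simp [hH.one_mul]
end DoiHopf
end
end
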